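/- arXiv:2503.04577 — 2 statements merged into one kernel-verified Lean document; each statement's English description precedes it below -/
import Mathlib

section
/- For all vectors a, b in R^n and all p ≥ 2, one has ⟨‖a‖^{p−2}a − ‖b‖^{p−2}b, a−b⟩ ≥ (1/2)^{p−2}‖a−b‖^p. -/
/-!
Write `A = ‖a‖`, `B = ‖b‖`, `q = p - 2` and `u = ‖a - b‖²`. Then
`⟪A^q a - B^q b, a - b⟫ = (A^q + B^q)/2 · u + (A^q - B^q)/2 · (A² - B²)` is affine in `u`, while
`2^{-q} ‖a - b‖^p = 2^{-q} u^{p/2}` is convex in `u`, and `u` ranges over `[(A - B)², (A + B)²]`.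
So it suffices to check the two endpoints: at `u = (A - B)²` the claim follows from the
superadditivity `(A - B)^{q+1} ≤ A^{q+1} - B^{q+1}` (for `B ≤ A`), and at `u = (A + B)²` from the
power-mean inequality `(A + B)^{q+1} ≤ 2^q (A^{q+1} + B^{q+1})`.
-/

open Real Set RealInnerProductSpace

namespace Real

lemma sq_rpow_div_two {x : ℝ} (hx : 0 ≤ x) (r : ℝ) : (x ^ 2) ^ (r / 2) = x ^ r := by
  rw [← rpow_natCast_mul hx]
  congr 1
  push_cast
  ring

lemma sub_rpow_le_rpow_sub_rpow {a b s : ℝ} (hb : 0 ≤ b) (hba : b ≤ a) (hs : 1 ≤ s) :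
    (a - b) ^ s ≤ a ^ s - b ^ s := by
  have h := add_rpow_le_rpow_add (sub_nonneg.2 hba) hb hs
  rw [sub_add_cancel] at h
  linarith

lemma rpow_add_le_two_rpow_mul_add_rpow {a b s : ℝ} (ha : 0 ≤ a) (hb : 0 ≤ b) (hs : 1 ≤ s) :
    (a + b) ^ s ≤ 2 ^ (s - 1) * (a ^ s + b ^ s) := by
  lift a to NNReal using ha
  lift b to NNReal using hb
  exact_mod_cast NNReal.rpow_add_le_mul_rpow_add_rpow a b hs

end Real

section Endpoints

variable {A B q : ℝ}

lemma abs_sub_rpow_add_two_le (hA : 0 ≤ A) (hB : 0 ≤ B) (hq : 0 ≤ q) :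
    |A - B| ^ (q + 2) ≤ (A - B) * (A ^ q * A - B ^ q * B) := by
  wlog hBA : B ≤ A generalizing A B
  · simpa only [abs_sub_comm, show (B - A) * (B ^ q * B - A ^ q * A)
      = (A - B) * (A ^ q * A - B ^ q * B) by ring] using this hB hA (le_of_not_ge hBA)
  have hAB : 0 ≤ A - B := sub_nonneg.2 hBA
  rw [abs_of_nonneg hAB, show q + 2 = (q + 1) + 1 by ring, rpow_add_one' hAB (by linarith),
    ← rpow_add_one' hA (by linarith), ← rpow_add_one' hB (by linarith), mul_comm]
  exact mul_le_mul_of_nonneg_left (sub_rpow_le_rpow_sub_rpow hB hBA (by linarith)) hAB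

lemma half_rpow_mul_add_rpow_add_two_le (hA : 0 ≤ A) (hB : 0 ≤ B) (hq : 0 ≤ q) :
    (1 / 2) ^ q * (A + B) ^ (q + 2) ≤ (A + B) * (A ^ q * A + B ^ q * B) := by
  have hAB : 0 ≤ A + B := add_nonneg hA hB
  have hmean := rpow_add_le_two_rpow_mul_add_rpow hA hB (s := q + 1) (by linarith)
  rw [add_sub_cancel_right, rpow_add_one' hA (by linarith), rpow_add_one' hB (by linarith)] at hmean
  calc (1 / 2) ^ q * (A + B) ^ (q + 2)
      = (A + B) * ((1 / 2) ^ q * (A + B) ^ (q + 1)) := by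
        rw [show q + 2 = (q + 1) + 1 by ring, rpow_add_one' hAB (by linarith)]; ring
    _ ≤ (A + B) * ((1 / 2) ^ q * (2 ^ q * (A ^ q * A + B ^ q * B))) := by gcongr
    _ = (A + B) * (A ^ q * A + B ^ q * B) := by
        rw [← mul_assoc ((1 / 2 : ℝ) ^ q), ← mul_rpow (by norm_num) (by norm_num)]; norm_num

end Endpoints

lemma half_rpow_mul_rpow_le_of_mem_Icc {A B q u : ℝ} (hA : 0 ≤ A) (hB : 0 ≤ B) (hq : 0 ≤ q)
    (hu : u ∈ Icc ((A - B) ^ 2) ((A + B) ^ 2)) :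
    (1 / 2) ^ q * u ^ ((q + 2) / 2)
      ≤ (A ^ q + B ^ q) / 2 * u + (A ^ q - B ^ q) / 2 * (A ^ 2 - B ^ 2) := by
  set c := (A ^ q + B ^ q) / 2
  set d := (A ^ q - B ^ q) / 2 * (A ^ 2 - B ^ 2)
  set g : ℝ → ℝ := fun u ↦ (1 / 2) ^ q * u ^ ((q + 2) / 2) - (c * u + d)
  have hg : ConvexOn ℝ (Ici 0) g :=
    ((convexOn_rpow (by linarith)).smul (by positivity)).sub
      (((concaveOn_id (convex_Ici 0)).smul (by positivity)).add_const d)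
  have hleft : g ((A - B) ^ 2) ≤ 0 := by
    simp only [g, c, d, ← sq_abs (A - B), sq_rpow_div_two (abs_nonneg _), sub_nonpos]
    calc (1 / 2) ^ q * |A - B| ^ (q + 2) ≤ |A - B| ^ (q + 2) :=
          mul_le_of_le_one_left (by positivity) (rpow_le_one (by norm_num) (by norm_num) hq)
      _ ≤ (A - B) * (A ^ q * A - B ^ q * B) := abs_sub_rpow_add_two_le hA hB hq
      _ = _ := by rw [sq_abs]; ring
  have hright : g ((A + B) ^ 2) ≤ 0 := by
    simp only [g, c, d, sq_rpow_div_two (add_nonneg hA hB), sub_nonpos]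
    calc (1 / 2) ^ q * (A + B) ^ (q + 2) ≤ (A + B) * (A ^ q * A + B ^ q * B) :=
          half_rpow_mul_add_rpow_add_two_le hA hB hq
      _ = _ := by ring
  have hmem : u ∈ segment ℝ ((A - B) ^ 2) ((A + B) ^ 2) := by
    rwa [segment_eq_Icc (hu.1.trans hu.2)]
  have hgu := (hg.le_on_segment (mem_Ici.2 (sq_nonneg _)) (mem_Ici.2 (sq_nonneg _)) hmem).trans
    (max_le hleft hright)
  simpa only [g, sub_nonpos] using hgu

lemma real_inner_smul_sub_smul_sub {E : Type*} [NormedAddCommGroup E] [InnerProductSpace ℝ E]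
    (a b : E) (α β : ℝ) :
    ⟪α • a - β • b, a - b⟫ = (α + β) / 2 * ‖a - b‖ ^ 2 + (α - β) / 2 * (‖a‖ ^ 2 - ‖b‖ ^ 2) := by
  rw [norm_sub_sq_real]
  simp only [inner_sub_left, inner_sub_right, real_inner_smul_left, real_inner_self_eq_norm_sq,
    real_inner_comm a b]
  ring

theorem half_rpow_mul_norm_sub_rpow_le_inner {E : Type*} [NormedAddCommGroup E]
    [InnerProductSpace ℝ E] (a b : E) {q : ℝ} (hq : 0 ≤ q) :
    (1 / 2) ^ q * ‖a - b‖ ^ (q + 2) ≤ ⟪‖a‖ ^ q • a - ‖b‖ ^ q • b, a - b⟫ := by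
  have hu : ‖a - b‖ ^ 2 ∈ Icc ((‖a‖ - ‖b‖) ^ 2) ((‖a‖ + ‖b‖) ^ 2) :=
    ⟨sq_le_sq.2 ((abs_norm_sub_norm_le a b).trans (le_abs_self _)),
      pow_le_pow_left₀ (norm_nonneg _) (norm_sub_le a b) 2⟩
  rw [real_inner_smul_sub_smul_sub, ← sq_rpow_div_two (norm_nonneg _)]
  exact half_rpow_mul_rpow_le_of_mem_Icc (norm_nonneg a) (norm_nonneg b) hq hu

theorem basic_inequality_I_c (n : ℕ) (a b : EuclideanSpace ℝ (Fin n)) (p : ℝ)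
    (hp : 2 ≤ p) :
    (inner ℝ (‖a‖ ^ (p - 2) • a - ‖b‖ ^ (p - 2) • b) (a - b) : ℝ)
      ≥ (1 / 2 : ℝ) ^ (p - 2) * ‖a - b‖ ^ p := by
  simpa using half_rpow_mul_norm_sub_rpow_le_inner a b (sub_nonneg.2 hp)
end

section
/- Let p > 1, φ: R^n → R ∪ {+∞} a proper lower semicontinuous function, and x̄ ∈ dom φ. If x̄ ∈ prox_{γ̂,p}φ(x̄) for some γ̂ > 0 (i.e., x̄ is a proximal fixed point), then for each γ ∈ (0, γ̂), prox_{γ,p}φ(x̄) = {x̄}, that is, x̄ is the unique minimizer of y ↦ φ(y) + (1/(pγ))‖x̄−y‖^p. -/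
/-!
At a proximal fixed point `x̄` the penalty vanishes, so the value of the prox objective at `x̄` is
`φ x̄` for every step size. Shrinking the step from `γ̂` to `γ` enlarges the penalty, which keeps
`x̄` a minimizer, and enlarges it strictly at every `y ≠ x̄`: a minimizer `y ≠ x̄` for `γ` would
then do strictly better than `x̄` for `γ̂`.
-/

open Real

variable {E : Type*} [NormedAddCommGroup E]

noncomputable def proxObjective (φ : E → EReal) (p γ : ℝ) (x y : E) : EReal :=
  φ y + ((1 / (p * γ) * ‖x - y‖ ^ p : ℝ) : EReal)

def prox (φ : E → EReal) (p γ : ℝ) (x : E) : Set E :=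
  {y | ∀ z, proxObjective φ p γ x y ≤ proxObjective φ p γ x z}

section

variable {φ : E → EReal} {p γ γ' : ℝ}

lemma proxObjective_self (hp : 0 < p) (x : E) : proxObjective φ p γ x x = φ x := by
  simp [proxObjective, zero_rpow hp.ne']

lemma proxObjective_anti (hp : 0 < p) (hγ : 0 < γ) (hγγ' : γ ≤ γ') (x y : E) :
    proxObjective φ p γ' x y ≤ proxObjective φ p γ x y := by
  unfold proxObjective
  gcongr

lemma proxObjective_strictAnti (hp : 0 < p) (hγ : 0 < γ) (hγγ' : γ < γ') {x y : E}
    (hyx : y ≠ x) (hbot : φ y ≠ ⊥) (htop : φ y ≠ ⊤) :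
    proxObjective φ p γ' x y < proxObjective φ p γ x y := by
  have hpenalty : 1 / (p * γ') * ‖x - y‖ ^ p < 1 / (p * γ) * ‖x - y‖ ^ p :=
    mul_lt_mul_of_pos_right (one_div_lt_one_div_of_lt (by positivity) (by gcongr))
      (rpow_pos_of_pos (norm_pos_iff.2 (sub_ne_zero.2 hyx.symm)) p)
  unfold proxObjective
  lift φ y to ℝ using ⟨htop, hbot⟩ with a
  exact_mod_cast add_lt_add_right hpenalty a

lemma mem_prox_of_mem_prox_of_le (hp : 0 < p) (hγ : 0 < γ) (hγγ' : γ ≤ γ') {x : E}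
    (hx : x ∈ prox φ p γ' x) : x ∈ prox φ p γ x := fun z =>
  calc proxObjective φ p γ x x = proxObjective φ p γ' x x := by
        rw [proxObjective_self hp, proxObjective_self hp]
    _ ≤ proxObjective φ p γ' x z := hx z
    _ ≤ proxObjective φ p γ x z := proxObjective_anti hp hγ hγγ' x z

lemma eq_of_mem_prox_of_mem_prox (hp : 0 < p) (hγ : 0 < γ) (hγγ' : γ < γ')
    {x y : E} (hbot : φ y ≠ ⊥) (hdom : φ x ≠ ⊤) (hx : x ∈ prox φ p γ' x)
    (hy : y ∈ prox φ p γ x) : y = x := by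
  by_contra hyx
  have hy_le : proxObjective φ p γ x y ≤ φ x := (hy x).trans_eq (proxObjective_self hp x)
  have hy_top : φ y ≠ ⊤ := by
    have := ne_top_of_le_ne_top hdom hy_le
    rwa [proxObjective, EReal.add_ne_top_iff_of_ne_bot_of_ne_top (EReal.coe_ne_bot _)
      (EReal.coe_ne_top _)] at this
  have hx_le : φ x ≤ proxObjective φ p γ' x y := (proxObjective_self hp x).symm.trans_le (hx y)
  exact (proxObjective_strictAnti hp hγ hγγ' hyx hbot hy_top).not_ge (hy_le.trans hx_le)

end

theorem prox_fixed_point_implies_prox_singleton_general (n : ℕ)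
    (φ : EuclideanSpace ℝ (Fin n) → EReal) (p γhat : ℝ)
    (xbar : EuclideanSpace ℝ (Fin n)) (hp : 1 < p)
    (hbot : ∀ x, φ x ≠ ⊥)
    (hdom : φ xbar ≠ ⊤)
    (hfix : ∀ z, φ xbar + ((1 / (p * γhat) * ‖xbar - xbar‖ ^ p : ℝ) : EReal)
        ≤ φ z + ((1 / (p * γhat) * ‖xbar - z‖ ^ p : ℝ) : EReal)) :
    ∀ γ : ℝ, 0 < γ → γ < γhat →
      {y | ∀ z, φ y + ((1 / (p * γ) * ‖xbar - y‖ ^ p : ℝ) : EReal)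
          ≤ φ z + ((1 / (p * γ) * ‖xbar - z‖ ^ p : ℝ) : EReal)} = {xbar} := by
  intro γ hγ hγγhat
  have hp0 : 0 < p := one_pos.trans hp
  have hfix' : xbar ∈ prox φ p γhat xbar := hfix
  change prox φ p γ xbar = {xbar}
  exact Set.eq_singleton_iff_unique_mem.2
    ⟨mem_prox_of_mem_prox_of_le hp0 hγ hγγhat.le hfix',
      fun y hy => eq_of_mem_prox_of_mem_prox hp0 hγ hγγhat (hbot y) hdom hfix' hy⟩

theorem prox_fixed_point_implies_prox_singleton (n : ℕ)
    (φ : EuclideanSpace ℝ (Fin n) → EReal) (p γhat : ℝ)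
    (xbar : EuclideanSpace ℝ (Fin n)) (hp : 1 < p)
    (hbot : ∀ x, φ x ≠ ⊥) (hlsc : LowerSemicontinuous φ)
    (hdom : φ xbar ≠ ⊤) (hγhat : 0 < γhat)
    (hfix : ∀ z, φ xbar + ((1 / (p * γhat) * ‖xbar - xbar‖ ^ p : ℝ) : EReal)
        ≤ φ z + ((1 / (p * γhat) * ‖xbar - z‖ ^ p : ℝ) : EReal)) :
    ∀ γ : ℝ, 0 < γ → γ < γhat →
      {y | ∀ z, φ y + ((1 / (p * γ) * ‖xbar - y‖ ^ p : ℝ) : EReal)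
          ≤ φ z + ((1 / (p * γ) * ‖xbar - z‖ ^ p : ℝ) : EReal)} = {xbar} :=
  prox_fixed_point_implies_prox_singleton_general n φ p γhat xbar hp hbot hdom hfix
end
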